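/- Let 𝒳 be any category. Let Cat/𝒳 denote the category whose objects are pairs (I, X) with I a small category and X : I ⥤ 𝒳, and whose morphisms (I, X) → (J, Y) are functors F : I ⥤ J with F ⋙ Y = X. Then the inclusion functor Cat/𝒳 ⥤ Diag°(𝒳), sending (I, X) to (I, X) and F to (F, 𝟙_X), preserves all colimits: it sends every colimit cocone in Cat/𝒳 (of any small shape) to a colimit cocone in Diag°(𝒳). -/

import Mathlib

open CategoryTheory

universe v u

namespace DiagPaper

variable (𝒳 : Type u) [Category.{v} 𝒳]

structure DiagObj : Type (max u (v + 1)) where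
  shape : Cat.{v, v}
  diag : shape ⥤ 𝒳

variable {𝒳}

structure DiagHom (A B : DiagObj 𝒳) : Type v where
  F : A.shape ⥤ B.shape
  φ : A.diag ⟶ F ⋙ B.diag

theorem DiagHom.ext' {A B : DiagObj 𝒳} {f g : DiagHom A B}
    (hF : f.F = g.F) (hφ : HEq f.φ g.φ) : f = g := by
  cases f; cases g
  dsimp only at hF hφ
  subst hF
  rw [eq_of_heq hφ]

instance : Category (DiagObj 𝒳) where
  Hom := DiagHom
  id A := ⟨𝟭 A.shape, 𝟙 A.diag⟩
  comp f g := ⟨f.F ⋙ g.F, f.φ ≫ Functor.whiskerLeft f.F g.φ⟩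
  id_comp f := DiagHom.ext' (Functor.id_comp _) (by apply heq_of_eq; ext i; simp)
  comp_id f := DiagHom.ext' (Functor.comp_id _) (by apply heq_of_eq; ext i; simp)
  assoc f g h := DiagHom.ext' (Functor.assoc _ _ _) (by apply heq_of_eq; ext i; simp)

@[simp] theorem DiagObj.comp_F {A B C : DiagObj 𝒳} (f : A ⟶ B) (g : B ⟶ C) :
    (f ≫ g).F = f.F ⋙ g.F := rfl

@[simp] theorem DiagObj.comp_φ {A B C : DiagObj 𝒳} (f : A ⟶ B) (g : B ⟶ C) :
    (f ≫ g).φ = f.φ ≫ Functor.whiskerLeft f.F g.φ := rfl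

@[simp] theorem DiagObj.id_F (A : DiagObj 𝒳) : (𝟙 A : DiagHom A A).F = 𝟭 A.shape := rfl

@[simp] theorem DiagObj.id_φ (A : DiagObj 𝒳) : (𝟙 A : DiagHom A A).φ = 𝟙 A.diag := rfl

/-- morphisms of the strict slice `Cat/𝒳`: functors strictly commuting with the diagrams. -/
structure SliceHom (A B : DiagObj 𝒳) : Type v where
  F : A.shape ⥤ B.shape
  w : F ⋙ B.diag = A.diag

theorem SliceHom.ext' {A B : DiagObj 𝒳} {f g : SliceHom A B} (hF : f.F = g.F) : f = g := by
  cases f; cases g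
  dsimp only at hF
  subst hF
  rfl

variable (𝒳)

/-- The strict slice category `Cat/𝒳`. -/
def CatSlice : Type (max u (v + 1)) := DiagObj 𝒳

instance : Category (CatSlice 𝒳) where
  Hom A B := SliceHom A B
  id A := ⟨𝟭 A.shape, Functor.id_comp _⟩
  comp f g := ⟨f.F ⋙ g.F, by rw [Functor.assoc, g.w, f.w]⟩
  id_comp f := SliceHom.ext' (Functor.id_comp _)
  comp_id f := SliceHom.ext' (Functor.comp_id _)
  assoc f g h := SliceHom.ext' (Functor.assoc _ _ _)

variable {𝒳}

theorem heq_eqToHom_id {C : Type*} [Category C] {a b : C} (h : a = b) :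
    HEq (eqToHom h) (𝟙 a) := by subst h; rfl

variable (𝒳)

/-- The (non-full) inclusion of the strict slice `Cat/𝒳` into `Diag°(𝒳)`,
sending `(I, X)` to `(I, X)` and `F` to `(F, 𝟙_X)`. -/
def sliceInclusion : CatSlice 𝒳 ⥤ DiagObj 𝒳 where
  obj A := A
  map {A B} f := ⟨f.F, eqToHom f.w.symm⟩
  map_id A := DiagHom.ext' rfl
    (heq_eqToHom_id ((Functor.id_comp A.diag).symm))
  map_comp {A B C} f g := DiagHom.ext' rfl (by
    apply heq_of_eq
    ext i
    erw [DiagObj.comp_φ]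
    simp [eqToHom_app])




section Aux

variable {𝒳 : Type u} [Category.{v} 𝒳]

theorem DiagHom.ext'' {A B : DiagObj 𝒳} {f g : DiagHom A B} (hF : f.F = g.F)
    (h : ∀ i, f.φ.app i = g.φ.app i ≫ eqToHom (by rw [hF])) : f = g := by
  cases f; cases g
  dsimp only at hF
  subst hF
  simp only [eqToHom_refl, Category.comp_id] at h
  congr 1
  ext i
  exact h i

theorem commaObjExt {A' : Type*} [Category A'] {B' : Type*} [Category B'] {T : Type*} [Category T]
    {L : A' ⥤ T} {R : B' ⥤ T} {X Y : Comma L R} (h1 : X.left = Y.left) (h2 : X.right = Y.right)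
    (h3 : X.hom = eqToHom (by rw [h1]) ≫ Y.hom ≫ eqToHom (by rw [h2])) : X = Y := by
  cases X; cases Y
  dsimp only at h1 h2
  subst h1; subst h2
  simp only [eqToHom_refl, Category.comp_id, Category.id_comp] at h3
  rw [h3]

theorem comma_hom_congr {A' : Type*} [Category A'] {B' : Type*} [Category B'] {T : Type*}
    [Category T] {L : A' ⥤ T} {R : B' ⥤ T} {X Y : Comma L R} (h : X = Y) :
    X.hom = eqToHom (by rw [h]) ≫ Y.hom ≫ eqToHom (by rw [h]) := by
  subst h; simp

theorem eqToHom_aux1 {C : Type*} [Category C] {x a b c y : C} (f : x ⟶ y) (P : a = x)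
    (Q : a = b) (R : b = c) (S : c = x) (T : y = y) :
    eqToHom P ≫ f = eqToHom Q ≫ (eqToHom R ≫ eqToHom S ≫ f) ≫ eqToHom T := by
  subst_vars; simp

theorem eqToHom_aux2 {C : Type*} [Category C] {x b c y : C} (f : x ⟶ y)
    (Q : x = b) (R : b = c) (S : c = x) (T : y = y) :
    f = eqToHom Q ≫ (eqToHom R ≫ eqToHom S ≫ f) ≫ eqToHom T := by
  subst_vars; simp

theorem eqToHom_aux3 {C : Type*} [Category C] {x y z w : C} (f : x ⟶ w) (p : x = y)
    (q : y = x) (r : w = z) (s : z = w) :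
    f = eqToHom p ≫ eqToHom q ≫ f ≫ eqToHom r ≫ eqToHom s := by
  subst_vars; simp

theorem eqToHom_aux5 {C : Type*} [Category C] {x0 x1 x2 x3 y z : C} (S : x0 ⟶ y) (H : x2 ⟶ z)
    (a : x0 = x1) (P : x1 = x2) (b : x2 = x3) (e : x3 = x0) (c : y = z) (d : y = z)
    (h : H = eqToHom b ≫ (eqToHom e ≫ S) ≫ eqToHom c) :
    eqToHom a ≫ eqToHom P ≫ H = S ≫ eqToHom d := by
  subst h; subst_vars; simp

theorem comma_conj_left {A' : Type*} [Category A'] {B' : Type*} [Category B'] {T : Type*}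
    [Category T] {L : A' ⥤ T} {R : B' ⥤ T} {X X' Y Y' : Comma L R} (g : X' ⟶ Y') (p : X = X')
    (q : Y' = Y) (f : X.left ⟶ Y.left)
    (h : HEq f g.left) : f = (eqToHom p ≫ g ≫ eqToHom q).left := by
  subst p; subst q; simpa using eq_of_heq h

theorem comma_conj_right {A' : Type*} [Category A'] {B' : Type*} [Category B'] {T : Type*}
    [Category T] {L : A' ⥤ T} {R : B' ⥤ T} {X X' Y Y' : Comma L R} (g : X' ⟶ Y') (p : X = X')
    (q : Y' = Y) (f : X.right ⟶ Y.right)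
    (h : HEq f g.right) : f = (eqToHom p ≫ g ≫ eqToHom q).right := by
  subst p; subst q; simpa using eq_of_heq h

@[simp] theorem CatSlice.comp_F {A B C : CatSlice 𝒳} (f : A ⟶ B) (g : B ⟶ C) :
    (f ≫ g).F = f.F ⋙ g.F := rfl

@[simp] theorem CatSlice.id_F (A : CatSlice 𝒳) : SliceHom.F (𝟙 A) = 𝟭 A.shape := rfl

@[simp] theorem sliceInclusion_obj (A : CatSlice 𝒳) : (sliceInclusion 𝒳).obj A = A := rfl

@[simp] theorem sliceInclusion_map_F {A B : CatSlice 𝒳} (f : A ⟶ B) :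
    ((sliceInclusion 𝒳).map f).F = f.F := rfl

@[simp] theorem sliceInclusion_map_φ {A B : CatSlice 𝒳} (f : A ⟶ B) :
    ((sliceInclusion 𝒳).map f).φ = eqToHom f.w.symm := rfl

variable (A B : CatSlice 𝒳)

/-- The comma construction `(A.diag ↓ B.diag)`, as an object of `Cat/𝒳` via the
first projection. -/
def commaObj : CatSlice 𝒳 :=
  DiagObj.mk (Cat.of (Comma A.diag B.diag)) (Comma.fst A.diag B.diag ⋙ A.diag)

def commaFst : commaObj A B ⟶ A := ⟨Comma.fst A.diag B.diag, rfl⟩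

variable {A B}

/-- Given a strict morphism `u : X ⟶ A` and a lax morphism `d : X ⟶ B`, the induced strict
morphism from `X` into the comma object. -/
def commaLeg {X : CatSlice 𝒳} (u : X ⟶ A) (d : DiagHom X B) :
    X ⟶ commaObj A B where
  F :=
    { obj := fun i => ⟨u.F.obj i, d.F.obj i, eqToHom (Functor.congr_obj u.w i) ≫ d.φ.app i⟩
      map := fun {i i'} f =>
        { left := u.F.map f
          right := d.F.map f
          w := by
            have h := Functor.congr_hom u.w f
            dsimp only [Functor.comp_map] at h
            dsimp
            rw [h]
            simp only [Category.assoc, eqToHom_trans_assoc, eqToHom_refl, Category.id_comp]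
            rw [d.φ.naturality f]
            rfl }
      map_id := fun i => by apply Comma.hom_ext <;> simp [commaObj] <;> rfl
      map_comp := fun f g => by apply Comma.hom_ext <;> simp [commaObj] <;> rfl }
  w := u.w

theorem commaLeg_comp_fst {X : CatSlice 𝒳} (u : X ⟶ A) (d : DiagHom X B) :
    commaLeg u d ≫ commaFst A B = u :=
  SliceHom.ext' rfl

theorem comp_commaLeg {X Y : CatSlice 𝒳} (v : X ⟶ Y) (u : Y ⟶ A) (d : DiagHom Y B) :
    v ≫ commaLeg u d = commaLeg (v ≫ u) ((sliceInclusion 𝒳).map v ≫ d) := by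
  apply SliceHom.ext'
  refine CategoryTheory.Functor.ext (fun i => commaObjExt rfl rfl ?_) (fun i i' f => ?_)
  · dsimp [commaLeg]
    erw [DiagObj.comp_φ]
    simp [eqToHom_app]
    exact eqToHom_aux1 _ _ _ _ _ _
  · apply Comma.hom_ext
    · exact comma_conj_left _ _ _ _ HEq.rfl
    · exact comma_conj_right _ _ _ _ HEq.rfl

/-- Every lax morphism `A ⟶ B` gives a strict section of the comma object over `A`. -/
def toComma (m : DiagHom A B) : A ⟶ commaObj A B where
  F :=
    { obj := fun i => ⟨i, m.F.obj i, m.φ.app i⟩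
      map := fun {i i'} f => ⟨f, m.F.map f, m.φ.naturality f⟩
      map_id := fun i => by apply Comma.hom_ext <;> simp [commaObj] <;> rfl
      map_comp := fun f g => by apply Comma.hom_ext <;> simp [commaObj] <;> rfl }
  w := rfl

theorem comp_toComma {X : CatSlice 𝒳} (v : X ⟶ A) (m : DiagHom A B) :
    v ≫ toComma m = commaLeg v ((sliceInclusion 𝒳).map v ≫ m) := by
  apply SliceHom.ext'
  refine CategoryTheory.Functor.ext (fun i => commaObjExt rfl rfl ?_) (fun i i' f => ?_)
  · dsimp [toComma, commaLeg]
    erw [DiagObj.comp_φ]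
    simp [eqToHom_app]
    exact eqToHom_aux2 _ _ _ _ _
  · apply Comma.hom_ext
    · exact comma_conj_left _ _ _ _ HEq.rfl
    · exact comma_conj_right _ _ _ _ HEq.rfl

/-- A strict section of the comma object over `A` gives back a lax morphism `A ⟶ B`. -/
def ofComma (M : A ⟶ commaObj A B)
    (hfst : M.F ⋙ Comma.fst A.diag B.diag = 𝟭 A.shape) : DiagHom A B where
  F := M.F ⋙ Comma.snd A.diag B.diag
  φ :=
    { app := fun i =>
        eqToHom (congrArg A.diag.obj (Functor.congr_obj hfst i)).symm ≫ (M.F.obj i).hom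
      naturality := fun i i' f => by
        have hw := (M.F.map f).w
        have hl := Functor.congr_hom hfst f
        dsimp only [Functor.comp_map, Comma.fst_map, Functor.id_map] at hl
        change (M.F.map f).left = _ at hl
        rw [hl] at hw
        simp only [Functor.map_comp, eqToHom_map, Category.assoc] at hw
        dsimp
        erw [Category.assoc, ← hw]
        simp }

section Cocones

variable {J : Type v} [SmallCategory J] {F : J ⥤ CatSlice 𝒳}
  (c : Limits.Cocone F) (hc : Limits.IsColimit c)
  (s : Limits.Cocone (F ⋙ sliceInclusion 𝒳))

/-- The strict cocone over `F` with point the comma object built from a lax cocone `s`. -/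
def legCocone : Limits.Cocone F where
  pt := commaObj c.pt s.pt
  ι :=
    { app := fun j => commaLeg (c.ι.app j) (s.ι.app j)
      naturality := fun j j' f => by
        erw [comp_commaLeg, c.w f,
          show (sliceInclusion 𝒳).map (F.map f) ≫ s.ι.app j' = s.ι.app j from s.w f]
        exact (Category.comp_id _).symm }

theorem descM_fst :
    hc.desc (legCocone c s) ≫ commaFst c.pt s.pt = 𝟙 c.pt := by
  apply hc.hom_ext
  intro j
  have h : c.ι.app j ≫ hc.desc (legCocone c s) ≫ commaFst c.pt s.pt = c.ι.app j := by
    erw [← Category.assoc, hc.fac (legCocone c s) j]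
    exact commaLeg_comp_fst _ _
  exact h.trans (Category.comp_id _).symm

theorem descM_hfst :
    (hc.desc (legCocone c s)).F ⋙ Comma.fst c.pt.diag s.pt.diag = 𝟭 c.pt.shape :=
  congrArg SliceHom.F (descM_fst c hc s)

/-- The candidate descent morphism in `Diag°(𝒳)`. -/
def diagDesc : DiagHom c.pt s.pt :=
  ofComma (hc.desc (legCocone c s)) (descM_hfst c hc s)

theorem diagDesc_fac (j : J) :
    (sliceInclusion 𝒳).map (c.ι.app j) ≫ diagDesc c hc s = s.ι.app j := by
  have h1 : c.ι.app j ≫ hc.desc (legCocone c s) = commaLeg (c.ι.app j) (s.ι.app j) :=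
    hc.fac (legCocone c s) j
  have h2 : (c.ι.app j).F ⋙ (hc.desc (legCocone c s)).F =
      (commaLeg (c.ι.app j) (s.ι.app j)).F := congrArg SliceHom.F h1
  have hF : ((sliceInclusion 𝒳).map (c.ι.app j) ≫ diagDesc c hc s).F = (s.ι.app j).F := by
    show (c.ι.app j).F ⋙ (hc.desc (legCocone c s)).F ⋙ Comma.snd _ _ = (s.ι.app j).F
    erw [← Functor.assoc, h2]
    rfl
  refine DiagHom.ext'' hF (fun i => ?_)
  have h3 : (hc.desc (legCocone c s)).F.obj ((c.ι.app j).F.obj i) =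
      (commaLeg (c.ι.app j) (s.ι.app j)).F.obj i := Functor.congr_obj h2 i
  have h4 := comma_hom_congr h3
  dsimp [diagDesc, ofComma]
  erw [DiagObj.comp_φ, NatTrans.comp_app, sliceInclusion_map_φ, eqToHom_app, Functor.whiskerLeft_app]
  exact eqToHom_aux5 _ _ _ _ _ _ _ _ h4

theorem diagDesc_uniq (m : (sliceInclusion 𝒳).obj c.pt ⟶ s.pt)
    (hm : ∀ j, ((sliceInclusion 𝒳).mapCocone c).ι.app j ≫ m = s.ι.app j) :
    m = diagDesc c hc s := by
  simp only [Functor.mapCocone_ι_app] at hm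
  have hσ : toComma m = hc.desc (legCocone c s) := by
    apply hc.hom_ext
    intro j
    erw [comp_toComma, hc.fac (legCocone c s) j,
      show (sliceInclusion 𝒳).map (c.ι.app j) ≫ m = s.ι.app j from hm j]
    rfl
  have h5 : (toComma m).F = (hc.desc (legCocone c s)).F := congrArg SliceHom.F hσ
  have hF : m.F = (diagDesc c hc s).F := by
    show m.F = (hc.desc (legCocone c s)).F ⋙ Comma.snd _ _
    rw [← h5]
    rfl
  refine DiagHom.ext'' hF (fun i => ?_)
  have h6 : (hc.desc (legCocone c s)).F.obj i = (toComma m).F.obj i :=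
    (Functor.congr_obj h5 i).symm
  have h7 := comma_hom_congr h6
  dsimp [diagDesc, ofComma]
  rw [h7]
  simp [toComma, commaObj]
  exact eqToHom_aux3 _ _ _ _ _

end Cocones

end Aux

/-- **Peschke–Tholen, Corollary 2.7.**  For any category `𝒳`, the inclusion functor
`Cat/𝒳 ⥤ Diag°(𝒳)` preserves all colimits: it sends every colimit cocone of any small
shape in `Cat/𝒳` to a colimit cocone in `Diag°(𝒳)`. -/
theorem sliceInclusion_preserves_colimits
    (𝒳 : Type u) [Category.{v} 𝒳]
    (J : Type v) [SmallCategory J]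
    (F : J ⥤ CatSlice 𝒳) (c : Limits.Cocone F) (hc : Limits.IsColimit c) :
    Nonempty (Limits.IsColimit ((sliceInclusion 𝒳).mapCocone c)) := by
  exact ⟨{ desc := fun s => diagDesc c hc s
           fac := fun s j => diagDesc_fac c hc s j
           uniq := fun s m hm => diagDesc_uniq c hc s m hm }⟩

end DiagPaper
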